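/- arXiv:1705.11135 — 3 statements merged into one kernel-verified Lean document; each statement's English description precedes it below -/
import Mathlib

section
/- If ∇ is a metric connection on V, then π(∇) is also a metric connection: δ X (g Y Z) = g (π(∇)_X Y) Z + g Y (π(∇)_X Z) for all X, Y, Z ∈ V. -/
/-- A connection on the `A`-module `V`, relative to the action
`δ : V →ₗ[A] Derivation ℝ A A` of "vector fields" on "functions":
`A`-linear in the first argument, additive in the second, Leibniz rule. -/
def IsConnection {A : Type*} [CommRing A] [Algebra ℝ A]
    {V : Type*} [AddCommGroup V] [Module A V]
    (δ : V →ₗ[A] Derivation ℝ A A) (D : V → V → V) : Prop :=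
  (∀ (f : A) (X Y : V), D (f • X) Y = f • D X Y) ∧
  (∀ (X X' Y : V), D (X + X') Y = D X Y + D X' Y) ∧
  (∀ (X Y Y' : V), D X (Y + Y') = D X Y + D X Y') ∧
  (∀ (X : V) (f : A) (Y : V), D X (f • Y) = (δ X f) • Y + f • D X Y)

/-- The canonical involution `J_*` induced by an `α`-structure `J`:
`(J_*(∇))_X Y = α • J (∇_X (J Y))`. -/
noncomputable def Jstar {A : Type*} [CommRing A] [Algebra ℝ A]
    {V : Type*} [AddCommGroup V] [Module A V] [Module ℝ V]
    (α : ℝ) (J : V →ₗ[A] V) (D : V → V → V) : V → V → V :=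
  fun X Y => α • J (D X (J Y))

/-- The projection `π(∇) = (1/2) ∇ + (1/2) J_*(∇)`. -/
noncomputable def proj {A : Type*} [CommRing A] [Algebra ℝ A]
    {V : Type*} [AddCommGroup V] [Module A V] [Module ℝ V]
    (α : ℝ) (J : V →ₗ[A] V) (D : V → V → V) : V → V → V :=
  fun X Y => (1/2 : ℝ) • D X Y + (1/2 : ℝ) • Jstar α J D X Y

/-- A connection is adapted to `J` if `∇_X (J Y) = J (∇_X Y)`. -/
def AdaptedToJ {A : Type*} [CommRing A] [Algebra ℝ A]
    {V : Type*} [AddCommGroup V] [Module A V]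
    (J : V →ₗ[A] V) (D : V → V → V) : Prop :=
  ∀ X Y : V, D X (J Y) = J (D X Y)

/-- A connection is metric (adapted to `g`) if
`δ X (g Y Z) = g (∇_X Y) Z + g Y (∇_X Z)`. -/
def IsMetric {A : Type*} [CommRing A] [Algebra ℝ A]
    {V : Type*} [AddCommGroup V] [Module A V]
    (δ : V →ₗ[A] Derivation ℝ A A) (g : V →ₗ[A] V →ₗ[A] A)
    (D : V → V → V) : Prop :=
  ∀ X Y Z : V, δ X (g Y Z) = g (D X Y) Z + g Y (D X Z)

variable {A : Type*} [CommRing A] [Algebra ℝ A]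
variable {V : Type*} [AddCommGroup V] [Module A V] [Module ℝ V] [IsScalarTower ℝ A V]

/-- If `∇` is a metric connection, then `π(∇)` is also metric. -/
theorem proj_metric (δ : V →ₗ[A] Derivation ℝ A A)
    (α : ℝ) (hα : α = 1 ∨ α = -1)
    (J : V →ₗ[A] V) (hJ : ∀ Y : V, J (J Y) = α • Y)
    (ε : ℝ) (hε : ε = 1 ∨ ε = -1)
    (g : V →ₗ[A] V →ₗ[A] A) (hgsymm : ∀ X Y : V, g X Y = g Y X)
    (hgJ : ∀ X Y : V, g (J X) (J Y) = ε • g X Y)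
    (D : V → V → V) (hD : IsConnection δ D) (hDg : IsMetric δ g D) :
    IsMetric δ g (proj α J D) := by
  have hαsq : α * α = 1 := by rcases hα with h | h <;> simp [h]
  have hεsq : ε * ε = 1 := by rcases hε with h | h <;> simp [h]
  have gsmul1 : ∀ (r : ℝ) (u w : V), g (r • u) w = r • g u w := by
    intro r u w
    rw [LinearMap.map_smul_of_tower, LinearMap.smul_apply]
  have gsmul2 : ∀ (r : ℝ) (u w : V), g u (r • w) = r • g u w := by
    intro r u w
    rw [LinearMap.map_smul_of_tower]
  have key : ∀ u w : V, g (J u) w = (α * ε) • g u (J w) := by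
    intro u w
    have h := hgJ u (J w)
    rw [hJ w, gsmul2] at h
    calc g (J u) w = α • (α • g (J u) w) := by rw [smul_smul, hαsq, one_smul]
      _ = α • (ε • g u (J w)) := by rw [h]
      _ = (α * ε) • g u (J w) := by rw [smul_smul]
  have hJm : IsMetric δ g (Jstar α J D) := by
    intro X Y Z
    simp only [Jstar]
    rw [gsmul1, gsmul2, key, hgsymm Y (J (D X (J Z))), key (D X (J Z)) Y,
      hgsymm (D X (J Z)) (J Y), smul_smul, smul_smul,
      show α * (α * ε) = ε by rw [← mul_assoc, hαsq, one_mul], ← smul_add,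
      ← hDg X (J Y) (J Z), hgJ Y Z, Derivation.map_smul, smul_smul, hεsq, one_smul]
  intro X Y Z
  have h1 := hDg X Y Z
  have h2 := hJm X Y Z
  simp only [proj, map_add, LinearMap.add_apply, gsmul1, gsmul2]
  rw [show (1/2:ℝ) • g (D X Y) Z + (1/2:ℝ) • g (Jstar α J D X Y) Z +
      ((1/2:ℝ) • g Y (D X Z) + (1/2:ℝ) • g Y (Jstar α J D X Z)) =
      (1/2:ℝ) • (g (D X Y) Z + g Y (D X Z)) +
      (1/2:ℝ) • (g (Jstar α J D X Y) Z + g Y (Jstar α J D X Z)) by module,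
    ← h1, ← h2]
  module
end

section
/- If ∇ is a metric connection on V, then π(∇) is adapted to both J and g: π(∇)_X (J Y) = J (π(∇)_X Y) and δ X (g Y Z) = g (π(∇)_X Y) Z + g Y (π(∇)_X Z) for all X, Y, Z ∈ V. In particular, the first canonical connection ∇⁰ = π(∇) of a metric connection ∇ lies in the space of connections adapted to the pair (J, g). -/
variable {A : Type*} [CommRing A] [Algebra ℝ A]
variable {V : Type*} [AddCommGroup V] [Module A V] [Module ℝ V] [IsScalarTower ℝ A V]

/-- If `∇` is a metric connection, then `π(∇)` is adapted to both `J` and `g`: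
the first canonical connection `∇⁰ = π(∇)` lies in `𝒞(M, J, g)`. -/
theorem proj_adapted_to_J_and_g (δ : V →ₗ[A] Derivation ℝ A A)
    (α : ℝ) (hα : α = 1 ∨ α = -1)
    (J : V →ₗ[A] V) (hJ : ∀ Y : V, J (J Y) = α • Y)
    (ε : ℝ) (hε : ε = 1 ∨ ε = -1)
    (g : V →ₗ[A] V →ₗ[A] A) (hgsymm : ∀ X Y : V, g X Y = g Y X)
    (hgJ : ∀ X Y : V, g (J X) (J Y) = ε • g X Y)
    (D : V → V → V) (hD : IsConnection δ D) (hDg : IsMetric δ g D) :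
    AdaptedToJ J (proj α J D) ∧ IsMetric δ g (proj α J D) := by

  obtain ⟨hD1, hD2, hD3, hD4⟩ := hD
  have hα2 : α * α = 1 := by rcases hα with h | h <;> simp [h]
  have hε2 : ε * ε = 1 := by rcases hε with h | h <;> simp [h]
  have hDzero : ∀ X : V, D X 0 = 0 := by
    intro X
    have h := hD3 X 0 0
    simpa using h.symm
  have hDneg : ∀ X Y : V, D X (-Y) = -(D X Y) := by
    intro X Y
    have h := hD3 X Y (-Y)
    rw [add_neg_cancel, hDzero] at h
    exact eq_neg_of_add_eq_zero_right h.symm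
  have hDsmul : ∀ X Y : V, D X (α • Y) = α • D X Y := by
    intro X Y
    rcases hα with h | h
    · simp [h]
    · simp only [h, neg_one_smul]; exact hDneg X Y
  have hgJ1 : ∀ U W : V, g (J U) W = (α * ε) • g U (J W) := by
    intro U W
    have hW : W = α • J (J W) := by rw [hJ, smul_smul, hα2, one_smul]
    calc g (J U) W = g (J U) (α • J (J W)) := by rw [← hW]
      _ = α • g (J U) (J (J W)) := by rw [LinearMap.map_smul_of_tower]
      _ = α • (ε • g U (J W)) := by rw [hgJ]
      _ = (α * ε) • g U (J W) := by rw [smul_smul]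
  have hgJ2 : ∀ U W : V, g U (J W) = (α * ε) • g (J U) W := by
    intro U W
    rw [hgJ1, smul_smul,
      show α * ε * (α * ε) = (α * α) * (ε * ε) by ring, hα2, hε2, one_mul, one_smul]
  constructor
  · intro X Y
    simp only [proj, Jstar, map_add, LinearMap.map_smul_of_tower, hJ, hDsmul, smul_smul]
    rcases hα with h | h <;> subst h <;> norm_num <;> abel
  · intro X Y Z
    simp only [proj, Jstar, map_add, LinearMap.map_smul_of_tower,
      LinearMap.add_apply, LinearMap.smul_apply]
    have e1 : α • g (J (D X (J Y))) Z = ε • g (D X (J Y)) (J Z) := by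
      rw [hgJ1, smul_smul, show α * (α * ε) = (α * α) * ε by ring, hα2, one_mul]
    have e2 : α • g Y (J (D X (J Z))) = ε • g (J Y) (D X (J Z)) := by
      rw [hgJ2, smul_smul, show α * (α * ε) = (α * α) * ε by ring, hα2, one_mul]
    have key : g (D X (J Y)) (J Z) + g (J Y) (D X (J Z)) = ε • (δ X) (g Y Z) := by
      have h := hDg X (J Y) (J Z)
      rw [hgJ, Derivation.map_smul] at h
      exact h.symm
    have hm := hDg X Y Z
    rw [e1, e2]
    calc (δ X) (g Y Z)
        = (1/2 : ℝ) • (g (D X Y) Z + g Y (D X Z))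
          + (1/2 : ℝ) • (ε • (g (D X (J Y)) (J Z) + g (J Y) (D X (J Z)))) := by
          rw [key, ← hm, smul_smul, smul_smul, mul_assoc, hε2, mul_one, ← add_smul]
          norm_num
      _ = (1/2 : ℝ) • g (D X Y) Z + (1/2 : ℝ) • (ε • g (D X (J Y)) (J Z))
          + ((1/2 : ℝ) • g Y (D X Z) + (1/2 : ℝ) • (ε • g (J Y) (D X (J Z)))) := by
          simp only [smul_add]; abel
end

section
/- Suppose ∇⁺, ∇⁻, ∇, ∇ᶜ are connections on V such that ∇⁺ is adapted to J, ∇_X Y = (1/2) • ∇⁺_X Y + (1/2) • ∇⁻_X Y for all X, Y ∈ V (∇ is the midpoint of ∇⁺ and ∇⁻), and ∇ᶜ_X Y = 2 • π(∇)_X Y − ∇⁺_X Y for all X, Y ∈ V (π(∇) is the midpoint of ∇⁺ and ∇ᶜ). Then π(∇⁺) = ∇⁺ and π(∇⁻) = ∇ᶜ. (This is the algebraic content of the statement that on an almost Hermitian non-Kähler manifold of type 𝒢₁, where ∇ is the Levi-Civita connection, ∇± = ∇ ± (1/2)T^sk with T^sk the torsion of the unique Hermitian connection with totally skew-symmetric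 torsion, ∇⁺ is the Bismut connection and π(∇) = ∇⁰ is the midpoint of the Bismut and Chern connections, the projection π fixes ∇⁺ and sends ∇⁻ to the Chern connection ∇ᶜ.) -/
variable {A : Type*} [CommRing A] [Algebra ℝ A]
variable {V : Type*} [AddCommGroup V] [Module A V] [Module ℝ V] [IsScalarTower ℝ A V]

/-- If `∇⁺` is adapted to `J`, `∇` is the midpoint of `∇⁺` and `∇⁻`, and
`π(∇)` is the midpoint of `∇⁺` and `∇ᶜ`, then `π(∇⁺) = ∇⁺` and `π(∇⁻) = ∇ᶜ`
(algebraic content of: `π` fixes the Bismut connection `∇⁺` and sends `∇⁻`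
to the Chern connection `∇ᶜ` on an almost Hermitian non-Kähler `𝒢₁`-manifold). -/
theorem proj_plus_minus (δ : V →ₗ[A] Derivation ℝ A A)
    (α : ℝ) (hα : α = 1 ∨ α = -1)
    (J : V →ₗ[A] V) (hJ : ∀ Y : V, J (J Y) = α • Y)
    (Dp Dm D Dc : V → V → V)
    (hDp : IsConnection δ Dp) (hDm : IsConnection δ Dm)
    (hD : IsConnection δ D) (hDc : IsConnection δ Dc)
    (hDpJ : AdaptedToJ J Dp)
    (hmid : ∀ X Y : V, D X Y = (1/2 : ℝ) • Dp X Y + (1/2 : ℝ) • Dm X Y)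
    (hc : ∀ X Y : V, Dc X Y = (2 : ℝ) • proj α J D X Y - Dp X Y) :
    (∀ X Y : V, proj α J Dp X Y = Dp X Y) ∧
      (∀ X Y : V, proj α J Dm X Y = Dc X Y) := by
  have hα2 : α * α = 1 := by rcases hα with h | h <;> simp [h]
  have hJr : ∀ (r : ℝ) (v : V), J (r • v) = r • J v := fun r v => by
    rw [← algebraMap_smul A r v, map_smul, algebraMap_smul]
  have key : ∀ X Y : V, α • J (Dp X (J Y)) = Dp X Y := fun X Y => by
    rw [hDpJ, hJ, smul_smul, hα2, one_smul]
  have h1 : ∀ X Y : V, proj α J Dp X Y = Dp X Y := fun X Y => by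
    simp only [proj, Jstar, key]
    rw [← add_smul]; norm_num
  refine ⟨h1, fun X Y => ?_⟩
  rw [hc]
  simp only [proj, Jstar, hmid]
  rw [map_add J, hJr, hJr, smul_add α, smul_comm α (1/2:ℝ), smul_comm α (1/2:ℝ), key]
  module
end
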